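/- For ℝ_4, an element u = [u₁,u₂,u₃,u₄] is a zero divisor if and only if (u₁² - u₃² + 2u₂u₄)² + (u₄² - u₂² + 2u₁u₃)² = 0, i.e., det ς(u) = (u₁² - u₃² + 2u₂u₄)² + (u₄² - u₂² + 2u₁u₃)². -/

import Mathlib

open Matrix MeasureTheory Filter

noncomputable def gmat (n : ℕ) : Matrix (Fin n) (Fin n) ℝ :=
  Matrix.of fun i j => if (j : ℕ) = (i : ℕ) + 1 then 1
    else if (i : ℕ) = n - 1 ∧ (j : ℕ) = 0 then (-1) else 0

noncomputable def sig (n : ℕ) (u : Fin n → ℝ) : Matrix (Fin n) (Fin n) ℝ :=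
  ∑ ℓ : Fin n, u ℓ • gmat n ^ (ℓ : ℕ)

noncomputable def emul (n : ℕ) [NeZero n] (u v : Fin n → ℝ) : Fin n → ℝ :=
  fun j => (sig n u * sig n v) 0 j

noncomputable def einv (n : ℕ) [NeZero n] (u : Fin n → ℝ) : Fin n → ℝ :=
  fun j => (sig n u)⁻¹ 0 j

noncomputable def pd2 (n : ℕ) (h : (Fin n → ℝ) → ℝ) (i : Fin n) (a : Fin n → ℝ) : ℝ :=
  lineDeriv ℝ (fun x => lineDeriv ℝ h x (Pi.single i 1)) a (Pi.single i 1)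

/-! `sig n u = ∑ uₗ gˡ` is a polynomial in the negacyclic shift `g`, so these matrices commute,
and the first row of `gˡ` is the `ℓ`-th unit vector. Hence `u * v = v ᵥ* sig n u`, and `u` is a
zero divisor exactly when `sig n u` is singular. For `n = 4` the determinant is expanded directly. -/

lemma gmat_pow_apply_zero {n ℓ : ℕ} (hℓ : ℓ < n) (k : Fin n) :
    (gmat n ^ ℓ) ⟨0, by omega⟩ k = if (k : ℕ) = ℓ then 1 else 0 := by
  induction ℓ generalizing k with
  | zero => simp [Matrix.one_apply, Fin.ext_iff, eq_comm]
  | succ ℓ ih =>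
    rw [pow_succ, Matrix.mul_apply, Finset.sum_eq_single ⟨ℓ, by omega⟩]
    · rw [ih (by omega)]
      simp [gmat, show ℓ ≠ n - 1 by omega]
    · intro m _ hm
      rw [ih (by omega), if_neg (Fin.ext_iff.not.mp hm), zero_mul]
    · simp

lemma sig_apply_zero {n : ℕ} [NeZero n] (u : Fin n → ℝ) (k : Fin n) : sig n u 0 k = u k := by
  have h (ℓ : Fin n) : (gmat n ^ (ℓ : ℕ)) 0 k = if k = ℓ then 1 else 0 := by
    simpa [Fin.ext_iff] using gmat_pow_apply_zero ℓ.isLt k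
  simp only [sig, Matrix.sum_apply, Matrix.smul_apply, h, smul_eq_mul, mul_ite, mul_one,
    mul_zero, Finset.sum_ite_eq, Finset.mem_univ, if_true]

lemma commute_sig (n : ℕ) (u v : Fin n → ℝ) : Commute (sig n u) (sig n v) :=
  .sum_left _ _ _ fun _ _ => .sum_right _ _ _ fun _ _ =>
    (((Commute.refl (gmat n)).pow_pow _ _).smul_left _).smul_right _

lemma emul_eq_vecMul {n : ℕ} [NeZero n] (u v : Fin n → ℝ) : emul n u v = v ᵥ* sig n u := by
  ext j
  rw [emul, (commute_sig n u v).eq, Matrix.mul_apply]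
  simp only [sig_apply_zero, Matrix.vecMul, dotProduct]

lemma exists_emul_eq_zero_iff {n : ℕ} [NeZero n] (u : Fin n → ℝ) :
    (∃ v ≠ 0, emul n u v = 0) ↔ (sig n u).det = 0 := by
  simp only [emul_eq_vecMul, Matrix.exists_vecMul_eq_zero_iff]

lemma sig_four (u : Fin 4 → ℝ) :
    sig 4 u = !![u 0, u 1, u 2, u 3;
                 -u 3, u 0, u 1, u 2;
                 -u 2, -u 3, u 0, u 1;
                 -u 1, -u 2, -u 3, u 0] := by
  ext i j
  fin_cases i <;> fin_cases j <;>
    simp [sig, gmat, Fin.sum_univ_four, pow_succ, Matrix.mul_apply]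

lemma det_sig_four (u : Fin 4 → ℝ) :
    (sig 4 u).det =
      (u 0 ^ 2 - u 2 ^ 2 + 2 * u 1 * u 3) ^ 2 + (u 3 ^ 2 - u 1 ^ 2 + 2 * u 0 * u 2) ^ 2 := by
  rw [sig_four, Matrix.det_succ_row_zero]
  simp [Fin.sum_univ_succ, Matrix.det_fin_three, Fin.succAbove]
  ring

theorem det_sig_R4_formula (u : Fin 4 → ℝ) :
    (sig 4 u).det =
      (u 0 ^ 2 - u 2 ^ 2 + 2 * u 1 * u 3) ^ 2 +
      (u 3 ^ 2 - u 1 ^ 2 + 2 * u 0 * u 2) ^ 2 ∧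
    ((∃ y : Fin 4 → ℝ, y ≠ 0 ∧ emul 4 u y = 0) ↔
      (u 0 ^ 2 - u 2 ^ 2 + 2 * u 1 * u 3) ^ 2 +
      (u 3 ^ 2 - u 1 ^ 2 + 2 * u 0 * u 2) ^ 2 = 0) :=
  ⟨det_sig_four u, det_sig_four u ▸ exists_emul_eq_zero_iff u⟩
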